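/- arXiv:2502.19926 — 7 statements merged into one kernel-verified Lean document; each statement's English description precedes it below -/
import Mathlib

section
/- If u and v are Lyndon words over an ordered alphabet, then u < v in the lexicographic order if and only if the concatenation uv is a Lyndon word. -/
/-- A word is primitive if it is not a proper power: `w = v^n` implies `n = 1`. -/
def Primitive {α : Type*} (w : List α) : Prop :=
  ∀ (v : List α) (n : ℕ), w = (List.replicate n v).flatten → n = 1

/-- A Lyndon word: nonempty and lexicographically strictly smaller than all
its proper nonempty suffixes. -/
def Lyndon {α : Type*} [LinearOrder α] (w : List α) : Prop :=
  w ≠ [] ∧ ∀ u v : List α, w = u ++ v → u ≠ [] → v ≠ [] → List.Lex (· < ·) w v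

/-- A Lyndon word for the reversed order `1 < 0` on `Bool`. -/
def LyndonRev (w : List Bool) : Prop :=
  w ≠ [] ∧ ∀ u v : List Bool, w = u ++ v → u ≠ [] → v ≠ [] → List.Lex (· > ·) w v

/-- A binary word is balanced if the numbers of `1`s in any two factors of the
same length differ by at most 1. (`false` plays the role of `0`, `true` of `1`.) -/
def Balanced01 (w : List Bool) : Prop :=
  ∀ u v : List Bool, u <:+: w → v <:+: w → u.length = v.length →
    (u.count true : ℤ) - (v.count true : ℤ) ≤ 1

/-- `w` has period `p`: `w[i] = w[i+p]` for all valid indices. -/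
def HasPeriod (w : List Bool) (p : ℕ) : Prop :=
  ∀ i : ℕ, i + p < w.length → w[i]? = w[i + p]?

/-- A central word: it has coprime periods `p`, `q` and length `p + q - 2`. -/
def Central (w : List Bool) : Prop :=
  ∃ p q : ℕ, Nat.Coprime p q ∧ HasPeriod w p ∧ HasPeriod w q ∧ w.length + 2 = p + q

/-- The lower Christoffel word of slope `b/a`: letter `i` is `1` (`true`) iff the
line `y = bx/(a+b)`... encoded via floor differences `⌊(i+1)b/(a+b)⌋ - ⌊ib/(a+b)⌋`. -/
def chr (a b : ℕ) : List Bool :=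
  List.ofFn (fun i : Fin (a + b) =>
    decide ((i : ℕ) * b / (a + b) < ((i : ℕ) + 1) * b / (a + b)))

/-- An (upward) digitally convex word: all factors of its Lyndon factorization
(for the order `0 < 1`) are balanced Lyndon words, i.e. primitive lower
Christoffel words. -/
def DC (w : List Bool) : Prop :=
  ∃ L : List (List Bool), L.flatten = w ∧ (∀ x ∈ L, Lyndon x ∧ Balanced01 x) ∧
    L.Chain' (fun a b => ¬ List.Lex (· < ·) a b)

/-- A downward digitally convex word: all factors of its Lyndon factorization
for the order `1 < 0` are balanced. -/
def DCdown (w : List Bool) : Prop :=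
  ∃ L : List (List Bool), L.flatten = w ∧ (∀ x ∈ L, LyndonRev x ∧ Balanced01 x) ∧
    L.Chain' (fun a b => ¬ List.Lex (· > ·) a b)

/-- `(u, v)` is the standard factorization of `u ++ v`: both parts nonempty and
`v` is the lexicographically least proper nonempty suffix of `u ++ v`. -/
def StdFact (u v : List Bool) : Prop :=
  u ≠ [] ∧ v ≠ [] ∧
    ∀ s : List Bool, s ≠ [] → s ≠ u ++ v → s <:+ u ++ v →
      s = v ∨ List.Lex (· < ·) v s

/-- A word is unbordered if it has no nonempty proper border. -/
def Unbordered (w : List Bool) : Prop :=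
  ∀ u : List Bool, u <+: w → u <:+ w → u ≠ w → u = []

/-!
If `u < v` and `v` is Lyndon, then `uv < v`: either `u` is a proper prefix of `v = uw`, and
`uv < v` reduces to the Lyndon inequality `v < w`, or `u` and `v` differ at a position inside
`u`. A proper suffix of `uv` is then `v`, a proper suffix of `v` (greater than `v`), or `sv` with
`s` a proper suffix of `u`, and `u < s` is decided inside `u` because `u` is longer than `s`.
Conversely, `u < uv < v` whenever `uv` is Lyndon.
-/

namespace List

variable {α : Type*} [LT α]

theorem lt_append_of_ne_nil (u : List α) {v : List α} (hv : v ≠ []) : u < u ++ v := by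
  obtain ⟨a, t, rfl⟩ := exists_cons_of_ne_nil hv
  simpa using append_left_lt (l₁ := u) (nil_lt_cons a t)

theorem append_lt_append_of_lt_of_not_prefix {x y : List α} (h : x < y) (hxy : ¬ x <+: y)
    (a b : List α) : x ++ a < y ++ b := by
  induction h with
  | nil => exact absurd nil_prefix hxy
  | rel hlt => exact Lex.rel hlt
  | cons _ ih => exact Lex.cons (ih fun hp => hxy ((prefix_cons_inj _).mpr hp))

end List

section Lyndon

variable {α : Type*} [LinearOrder α] {u v : List α}

theorem Lyndon.append_lt_of_lt (hv : Lyndon v) (hu : u ≠ []) (h : u < v) : u ++ v < v := by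
  by_cases hpre : u <+: v
  · obtain ⟨w, rfl⟩ := hpre
    have hw : w ≠ [] := by
      rintro rfl
      simp at h
    exact List.append_left_lt (hv.2 u w rfl hu hw)
  · simpa using List.append_lt_append_of_lt_of_not_prefix h hpre v []

theorem Lyndon.append_of_lt (hu : Lyndon u) (hv : Lyndon v) (h : u < v) : Lyndon (u ++ v) := by
  have huv_lt_v : u ++ v < v := hv.append_lt_of_lt hu.1 h
  refine ⟨List.append_ne_nil_of_left_ne_nil hu.1 v, fun a b hab ha hb => ?_⟩
  rcases List.append_eq_append_iff.mp hab.symm with ⟨s, rfl, rfl⟩ | ⟨c, rfl, rfl⟩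
  · rcases eq_or_ne s [] with rfl | hs
    · simpa using huv_lt_v
    · have hlen : ¬ a ++ s <+: s := fun hp => ha (by simpa using hp.length_le)
      simpa using List.append_lt_append_of_lt_of_not_prefix (hu.2 a s rfl ha hs) hlen v v
  · rcases eq_or_ne c [] with rfl | hc
    · simpa using huv_lt_v
    · exact lt_trans huv_lt_v (hv.2 c b rfl hc hb)

theorem Lyndon.lt_of_append (hu : u ≠ []) (hv : v ≠ []) (huv : Lyndon (u ++ v)) : u < v :=
  lt_trans (List.lt_append_of_ne_nil u hv) (huv.2 u v rfl hu hv)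

end Lyndon

/-- If `u` and `v` are Lyndon words, then `u < v` iff `uv` is a Lyndon word. -/
theorem stmt1 {α : Type*} [LinearOrder α] {u v : List α}
    (hu : Lyndon u) (hv : Lyndon v) :
    List.Lex (· < ·) u v ↔ Lyndon (u ++ v) :=
  ⟨hu.append_of_lt hv, Lyndon.lt_of_append hu.1 hv.1⟩
end

section
/- Every nonempty word over an ordered alphabet has a unique factorization as a non-increasing (with respect to the lexicographic order) concatenation of Lyndon words. -/
section LyndonAux

variable {α : Type*} [LinearOrder α]

private lemma lex_iff_lt (a b : List α) : List.Lex (· < ·) a b ↔ a < b := Iff.rfl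

private lemma lex_append_right (u t : List α) (ht : t ≠ []) : List.Lex (· < ·) u (u ++ t) := by
  induction u with
  | nil =>
    cases t with
    | nil => exact absurd rfl ht
    | cons a t => exact List.Lex.nil
  | cons a u ih => exact List.Lex.cons ih

private lemma lex_of_prefix {u v : List α} (h : u <+: v) (hne : u ≠ v) :
    List.Lex (· < ·) u v := by
  obtain ⟨t, rfl⟩ := h
  refine lex_append_right u t ?_
  rintro rfl; simp at hne

private lemma lex_append_of_not_prefix {u v : List α} (h : List.Lex (· < ·) u v)
    (hp : ¬ u <+: v) : ∀ x y : List α, List.Lex (· < ·) (u ++ x) (v ++ y) := by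
  induction h with
  | nil => exact absurd (List.nil_prefix) hp
  | @cons a u v h ih =>
    intro x y
    exact List.Lex.cons (ih (fun hpre => hp (List.cons_prefix_cons.mpr ⟨rfl, hpre⟩)) x y)
  | @rel a u b v h => intro x y; exact List.Lex.rel h

private lemma lex_append_left_iff (u v t : List α) :
    List.Lex (· < ·) (u ++ v) (u ++ t) ↔ List.Lex (· < ·) v t := by
  induction u with
  | nil => rfl
  | cons a u ih =>
    simp only [List.cons_append]
    constructor
    · intro h
      cases h with
      | cons h => exact ih.mp h
      | rel h => exact absurd h (lt_irrefl a)
    · intro h; exact List.Lex.cons (ih.mpr h)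

private lemma suffix_split {s u v : List α} (h : s <:+ u ++ v) :
    s <:+ v ∨ ∃ s', s' <:+ u ∧ s = s' ++ v := by
  rcases le_or_gt s.length v.length with hle | hlt
  · left
    rw [← List.reverse_prefix] at h ⊢
    rw [List.reverse_append] at h
    exact List.prefix_of_prefix_length_le h (List.prefix_append _ _) (by simpa using hle)
  · right
    obtain ⟨t, ht⟩ := h
    have htu : t <+: u := by
      have h1 : t <+: u ++ v := ⟨s, ht⟩
      have h2 : t.length ≤ u.length := by
        have := congrArg List.length ht
        simp at this; omega
      exact List.prefix_of_prefix_length_le h1 (List.prefix_append _ _) h2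
    obtain ⟨s', rfl⟩ := htu
    refine ⟨s', ⟨t, rfl⟩, ?_⟩
    rw [List.append_assoc] at ht
    exact List.append_cancel_left ht

/-- single letters are Lyndon -/
private lemma lyndon_singleton (a : α) : Lyndon [a] := by
  refine ⟨by simp, ?_⟩
  intro u v h hu hv
  rcases u with _ | ⟨x, u⟩
  · exact absurd rfl hu
  · rcases v with _ | ⟨y, v⟩
    · exact absurd rfl hv
    · simp at h

/-- the key merge lemma: if `u < v` are Lyndon, so is `u ++ v`. -/
private lemma lyndon_append {u v : List α} (hu : Lyndon u) (hv : Lyndon v)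
    (huv : List.Lex (· < ·) u v) : Lyndon (u ++ v) := by
  obtain ⟨hune, hus⟩ := hu
  obtain ⟨hvne, hvs⟩ := hv
  -- first: u ++ v < v
  have key : List.Lex (· < ·) (u ++ v) v := by
    by_cases hp : u <+: v
    · obtain ⟨t, rfl⟩ := hp
      have htne : t ≠ [] := by
        rintro rfl
        rw [List.append_nil] at huv
        exact lt_irrefl u ((lex_iff_lt _ _).mp huv)
      have h1 := hvs u t rfl hune htne
      exact (lex_append_left_iff u (u ++ t) t).mpr h1
    · have := lex_append_of_not_prefix huv hp v []
      simpa using this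
  refine ⟨by simp [hune], ?_⟩
  intro x s hx hxne hsne
  -- s is a proper nonempty suffix of u ++ v
  have hs : s <:+ u ++ v := ⟨x, hx.symm⟩
  rcases suffix_split hs with hsv | ⟨s', hs'u, rfl⟩
  · -- s is a suffix of v
    rcases eq_or_ne s v with rfl | hne
    · exact key
    · have hxv : List.Lex (· < ·) v s := by
        obtain ⟨t, rfl⟩ := hsv
        have htne : t ≠ [] := by rintro rfl; simp at hne
        exact hvs t s rfl htne (hsne)
      exact (lex_iff_lt _ _).mpr (lt_trans ((lex_iff_lt _ _).mp key) ((lex_iff_lt _ _).mp hxv))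
  · -- s = s' ++ v with s' a suffix of u
    rcases eq_or_ne s' [] with rfl | hs'ne
    · simpa using key
    -- s' is a proper suffix of u: proper because x ≠ []
    have hs'proper : s' ≠ u := by
      rintro rfl
      obtain ⟨t, ht⟩ := hs'u
      have : x ++ (s' ++ v) = [] ++ (s' ++ v) := by simpa using hx.symm
      have hxnil : x = [] := List.append_cancel_right this
      exact hxne hxnil
    have hlex : List.Lex (· < ·) u s' := by
      obtain ⟨t, rfl⟩ := hs'u
      have htne : t ≠ [] := by rintro rfl; simp at hs'proper
      exact hus t s' rfl htne hs'ne
    have hnp : ¬ u <+: s' := by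
      intro hpre
      have h1 := hpre.length_le
      obtain ⟨t, ht⟩ := hs'u
      have := congrArg List.length ht
      simp at this
      have hs'len : s'.length ≤ (t ++ s').length := by simp
      -- u = t ++ s', |u| ≤ |s'| forces t = [] hence s' = u
      have : t = [] := by
        have := congrArg List.length ht; simp at this
        have : t.length = 0 := by omega
        exact List.length_eq_zero_iff.mp this
      subst this
      simp at ht
      exact hs'proper ht
    exact lex_append_of_not_prefix hlex hnp v v

/-- decomposition of a non-chain -/
private lemma not_chain'_split {β : Type*} (r : β → β → Prop) :
    ∀ (L : List β), ¬ L.Chain' r → ∃ l₁ a b l₂, L = l₁ ++ a :: b :: l₂ ∧ ¬ r a b := by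
  intro L
  induction L with
  | nil => intro h; exact absurd List.isChain_nil h
  | cons a L ih =>
    intro h
    cases L with
    | nil => exact absurd (List.isChain_singleton a) h
    | cons b L =>
      by_cases hab : r a b
      · have : ¬ (b :: L).Chain' r := by
          intro hc; exact h (List.isChain_cons_cons.mpr ⟨hab, hc⟩)
        obtain ⟨l₁, x, y, l₂, heq, hr⟩ := ih this
        exact ⟨a :: l₁, x, y, l₂, by simp [heq], hr⟩
      · exact ⟨[], a, b, L, rfl, hab⟩

/-- existence by repeated merging -/
private lemma exists_fact : ∀ (n : ℕ) (L : List (List α)), L.length ≤ n →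
    (∀ x ∈ L, Lyndon x) →
    ∃ M : List (List α), M.flatten = L.flatten ∧ (∀ x ∈ M, Lyndon x) ∧
      M.Chain' (fun a b => ¬ List.Lex (· < ·) a b) := by
  intro n
  induction n with
  | zero =>
    intro L hL _
    have : L = [] := List.length_eq_zero_iff.mp (Nat.le_zero.mp hL)
    subst this
    exact ⟨[], rfl, by simp, List.isChain_nil⟩
  | succ n ih =>
    intro L hL hLyn
    by_cases hc : L.Chain' (fun a b => ¬ List.Lex (· < ·) a b)
    · exact ⟨L, rfl, hLyn, hc⟩
    · obtain ⟨l₁, a, b, l₂, rfl, hr⟩ := not_chain'_split _ L hc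
      push_neg at hr
      have ha : Lyndon a := hLyn a (by simp)
      have hb : Lyndon b := hLyn b (by simp)
      have hab : Lyndon (a ++ b) := lyndon_append ha hb hr
      have hlen : (l₁ ++ (a ++ b) :: l₂).length ≤ n := by
        simp at hL ⊢; omega
      have hLyn' : ∀ x ∈ l₁ ++ (a ++ b) :: l₂, Lyndon x := by
        intro x hx
        simp only [List.mem_append, List.mem_cons] at hx
        rcases hx with hx | rfl | hx
        · exact hLyn x (by simp [hx])
        · exact hab
        · exact hLyn x (by simp [hx])
      obtain ⟨M, hM1, hM2, hM3⟩ := ih _ hlen hLyn'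
      refine ⟨M, ?_, hM2, hM3⟩
      rw [hM1]; simp

/-- prefix of a flatten splits along blocks -/
private lemma prefix_flatten_split : ∀ (L : List (List α)) (p : List α),
    p <+: L.flatten → p ≠ [] →
    ∃ (L₁ : List (List α)) (x : List α) (L₂ : List (List α)) (s : List α),
      L = L₁ ++ x :: L₂ ∧ s <+: x ∧ s ≠ [] ∧ p = L₁.flatten ++ s := by
  intro L
  induction L with
  | nil =>
    intro p hp hpne
    simp only [List.flatten_nil, List.prefix_nil] at hp
    exact absurd hp hpne
  | cons x L ih =>
    intro p hp hpne
    rcases le_or_gt p.length x.length with hle | hlt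
    · have hpx : p <+: x := by
        refine List.prefix_of_prefix_length_le hp ?_ hle
        simp only [List.flatten_cons]
        exact List.prefix_append _ _
      exact ⟨[], x, L, p, rfl, hpx, hpne, by simp⟩
    · simp only [List.flatten_cons] at hp
      obtain ⟨t, ht⟩ := hp
      have hxp : x <+: p :=
        List.prefix_of_prefix_length_le (List.prefix_append _ _) ⟨t, ht⟩ (le_of_lt hlt)
      obtain ⟨p', rfl⟩ := hxp
      have hp' : p' <+: L.flatten := by
        rw [List.append_assoc] at ht
        exact ⟨t, List.append_cancel_left ht⟩
      have hp'ne : p' ≠ [] := by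
        rintro rfl; simp at hlt
      obtain ⟨L₁, y, L₂, s, rfl, hsy, hsne, hps⟩ := ih p' hp' hp'ne
      exact ⟨x :: L₁, y, L₂, s, rfl, hsy, hsne, by simp [hps]⟩

private lemma heads_eq {a b : List α} {L M : List (List α)}
    (ha : Lyndon a) (hLyn : ∀ x ∈ L, Lyndon x) (hb : Lyndon b)
    (hcL : (a :: L).Chain' (fun a b => ¬ List.Lex (· < ·) a b))
    (heq : a ++ L.flatten = b ++ M.flatten)
    (hlen : a.length ≤ b.length) : a = b := by
  by_contra hne
  -- a is a proper prefix of b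
  have hab : a <+: b := by
    refine List.prefix_of_prefix_length_le ⟨L.flatten, heq⟩ (List.prefix_append _ _) hlen
  obtain ⟨t, rfl⟩ := hab
  have htne : t ≠ [] := by rintro rfl; simp at hne
  -- t is a prefix of L.flatten
  have htL : t <+: L.flatten := by
    rw [List.append_assoc] at heq
    exact ⟨M.flatten, (List.append_cancel_left heq).symm⟩
  obtain ⟨L₁, x, L₂, s, hLsplit, hsx, hsne, rfl⟩ := prefix_flatten_split L t htL htne
  -- b = a ++ L₁.flatten ++ s, Lyndon, so b < s
  have hbs : List.Lex (· < ·) (a ++ (L₁.flatten ++ s)) s :=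
    hb.2 (a ++ L₁.flatten) s (by simp) (by simp [ha.1]) hsne
  -- s ≤ x
  have hsx' : s ≤ x := by
    rcases eq_or_ne s x with rfl | hne'
    · exact le_refl _
    · exact le_of_lt (lex_of_prefix hsx hne')
  -- x ≤ a from the chain
  have hxa : x ≤ a := by
    have hpw : (a :: L).Pairwise (fun u v => ¬ List.Lex (· < ·) u v) := by
      have : IsTrans (List α) (fun u v : List α => ¬ List.Lex (· < ·) u v) := by
        constructor
        intro p q r hpq hqr
        simp only [lex_iff_lt, not_lt] at *
        exact le_trans hqr hpq
      exact List.isChain_iff_pairwise.mp hcL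
    have hxmem : x ∈ L := by rw [hLsplit]; simp
    have := (List.pairwise_cons.mp hpw).1 x hxmem
    simpa [lex_iff_lt, not_lt] using this
  -- a < b
  have hablt : a < a ++ (L₁.flatten ++ s) :=
    (lex_iff_lt _ _).mp (lex_append_right a (L₁.flatten ++ s) (by simp [hsne]))
  -- combine: b < s ≤ x ≤ a < b
  have : (a : List α) ++ (L₁.flatten ++ s) < a ++ (L₁.flatten ++ s) :=
    lt_of_lt_of_le ((lex_iff_lt _ _).mp hbs) (le_trans hsx' (le_trans hxa (le_of_lt hablt)))
  exact absurd this (lt_irrefl _)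

private lemma fact_unique : ∀ (L M : List (List α)),
    (∀ x ∈ L, Lyndon x) → L.Chain' (fun a b => ¬ List.Lex (· < ·) a b) →
    (∀ x ∈ M, Lyndon x) → M.Chain' (fun a b => ¬ List.Lex (· < ·) a b) →
    L.flatten = M.flatten → L = M := by
  intro L
  induction L with
  | nil =>
    intro M _ _ hM _ hflat
    cases M with
    | nil => rfl
    | cons b M =>
      exfalso
      have : b = [] := by
        have := hflat.symm
        simp only [List.flatten_nil, List.flatten_cons] at this
        exact List.append_eq_nil_iff.mp this |>.1
      exact (hM b (by simp)).1 this
  | cons a L ih =>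
    intro M hL hcL hM hcM hflat
    cases M with
    | nil =>
      exfalso
      have : a = [] := by
        simp only [List.flatten_cons, List.flatten_nil] at hflat
        exact List.append_eq_nil_iff.mp hflat |>.1
      exact (hL a (by simp)).1 this
    | cons b M =>
      simp only [List.flatten_cons] at hflat
      have hab : a = b := by
        rcases le_total a.length b.length with h | h
        · exact heads_eq (hL a (by simp)) (fun x hx => hL x (by simp [hx]))
            (hM b (by simp)) hcL hflat h
        · exact (heads_eq (hM b (by simp)) (fun x hx => hM x (by simp [hx]))
            (hL a (by simp)) hcM hflat.symm h).symm
      subst hab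
      have hflat' : L.flatten = M.flatten := List.append_cancel_left hflat
      have := ih M (fun x hx => hL x (by simp [hx])) (hcL.tail)
        (fun x hx => hM x (by simp [hx])) (hcM.tail) hflat'
      rw [this]

end LyndonAux


/-- Every nonempty word has a unique non-increasing factorization in Lyndon words. -/
theorem stmt2 {α : Type*} [LinearOrder α] (w : List α) (hw : w ≠ []) :
    ∃! L : List (List α), L.flatten = w ∧ (∀ x ∈ L, Lyndon x) ∧
      L.Chain' (fun a b => ¬ List.Lex (· < ·) a b) := by
  obtain ⟨M, hM1, hM2, hM3⟩ := exists_fact (w.map (fun a => [a])).length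
    (w.map (fun a => [a])) le_rfl (by
      intro x hx
      simp only [List.mem_map] at hx
      obtain ⟨a, _, rfl⟩ := hx
      exact lyndon_singleton a)
  have hmap : ∀ v : List α, (List.map (fun a => [a]) v).flatten = v := by
    intro v
    induction v with
    | nil => rfl
    | cons a v ihv => simp [ihv]
  have hMflat : M.flatten = w := by rw [hM1, hmap]
  refine ⟨M, ⟨hMflat, hM2, hM3⟩, ?_⟩
  intro N ⟨hN1, hN2, hN3⟩
  exact fact_unique N M hN2 hN3 hM2 hM3 (by rw [hN1, hMflat])
end

section
/- Every central word over {0,1} is a palindrome. -/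

private lemma key_central : ∀ q p (w : List Bool), p ≤ q → Nat.Coprime p q → HasPeriod w p →
    HasPeriod w q → w.length + 2 = p + q →
    ∀ i j : ℕ, i + j + 1 = w.length → w[i]? = w[j]? := by
  intro q
  induction q using Nat.strong_induction_on with
  | _ q ih =>
    intro p w hpq hc hp hq hl i j hij
    rcases Nat.lt_or_ge q 2 with hq2 | hq2
    · omega
    have hp1 : 1 ≤ p := by
      rcases Nat.eq_zero_or_pos p with h0 | h; · simp [h0, Nat.Coprime] at hc; omega
      exact h
    have hplt : p < q := by
      rcases Nat.lt_or_ge p q with h | h; · exact h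
      have : p = q := le_antisymm hpq h
      subst this; simp [Nat.Coprime] at hc; omega
    set w' := w.take (q - 2) with hw'
    have hlen' : w'.length = q - 2 := by
      simp [hw', List.length_take]; omega
    have hget : ∀ k : ℕ, k < q - 2 → w'[k]? = w[k]? := by
      intro k hk; simp [hw', List.getElem?_take, hk]
    have hp' : HasPeriod w' p := by
      intro k hk
      rw [hlen'] at hk
      rw [hget k (by omega), hget (k + p) (by omega)]
      exact hp k (by omega)
    have hq' : HasPeriod w' (q - p) := by
      intro k hk
      rw [hlen'] at hk
      rw [hget k (by omega), hget (k + (q - p)) (by omega)]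
      have h1 := hp (k + (q - p)) (by omega)
      have h2 := hq k (by omega)
      have he : k + (q - p) + p = k + q := by omega
      rw [he] at h1
      rw [h2, h1]
    have hc' : Nat.Coprime p (q - p) := (Nat.coprime_sub_self_right (le_of_lt hplt)).mpr hc
    have hl' : w'.length + 2 = p + (q - p) := by omega
    have hP : ∀ a b : ℕ, a + b + 1 = w'.length → w'[a]? = w'[b]? := by
      rcases Nat.le_total p (q - p) with hle | hle
      · exact ih (q - p) (by omega) p w' hle hc' hp' hq' hl'
      · exact ih p (by omega) (q - p) w' hle hc'.symm hq' hp' (by omega)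
    have hPw : ∀ a b : ℕ, a + b + 3 = q → w[a]? = w[b]? := by
      intro a b hab
      rw [← hget a (by omega), ← hget b (by omega)]
      exact hP a b (by omega)
    have hcase : p ≤ i ∨ p ≤ j ∨ i = j := by omega
    rcases hcase with hi | hj | heq
    · have h1 := hp (i - p) (by omega)
      have he : i - p + p = i := by omega
      rw [he] at h1
      rw [← h1]
      exact hPw (i - p) j (by omega)
    · have h1 := hp (j - p) (by omega)
      have he : j - p + p = j := by omega
      rw [he] at h1
      rw [← h1]
      exact hPw i (j - p) (by omega)
    · rw [heq]

private lemma pointwise_central (w : List Bool) (h : Central w) :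
    ∀ i j : ℕ, i + j + 1 = w.length → w[i]? = w[j]? := by
  obtain ⟨p, q, hc, hp, hq, hl⟩ := h
  rcases Nat.le_total p q with hle | hle
  · exact key_central q p w hle hc hp hq hl
  · exact key_central p q w hle hc.symm hq hp (by omega)

/-- Every central word is a palindrome. -/
theorem stmt3 (w : List Bool) (h : Central w) : w.Palindrome := by
  apply List.Palindrome.of_reverse_eq
  apply List.ext_getElem?
  intro i
  rcases Nat.lt_or_ge i w.length with hi | hi
  · rw [List.getElem?_reverse hi]
    exact (pointwise_central w h (w.length - 1 - i) i (by omega))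
  · rw [List.getElem?_eq_none (by simpa using hi), List.getElem?_eq_none hi]
end

section
/- A binary word w is central if and only if it is a power of a single letter or there exist palindromes P and Q such that w = P01Q = Q10P. Moreover, in the latter case, P and Q are central words, |P|+2 and |Q|+2 are coprime, and w has periods |P|+2 and |Q|+2. -/
/-! Cutting a word with periods `p`, `q` and length `p + q - 2` at positions `p - 2` and `q - 2`
gives `w = P ++ [c, d] ++ Q = Q ++ [a, b] ++ P` with `|P| = p - 2`, `|Q| = q - 2`: the two periods
are the borders `P` and `Q`. Conversely such a double factorization yields the periods
`|P| + 2` and `|Q| + 2`. The theorem of Fine and Wilf does the rest: a common divisor `g ≥ 2` of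
the periods would be a period identifying the distinct letters at positions `|P|` and `|Q|`; and
if `w[p - 2] = w[q - 2]`, appending that letter keeps both periods, forcing period `1`.
A central word is a palindrome by Euclid's algorithm on its periods (`w.drop p` is a long border,
central for the periods `p`, `q - p`), and this makes the middle pairs mirror images. Finally, the
prefix of length `p - 2` is central, with periods `q % p` and `p - q % p`. -/

namespace List

variable {α : Type*} {w : List α} {p q : ℕ}

theorem HasPeriod.eq_replicate_of_one (h : w.HasPeriod 1) {x : α} (hx : x ∈ w) :
    w = replicate w.length x := by
  have hfirst : ∀ i < w.length, w[i]? = w[0]? := fun i hi => by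
    rw [← h.getElem?_mod 1 i w hi, Nat.mod_one]
  rw [eq_replicate_iff]
  refine ⟨rfl, fun b hb => ?_⟩
  obtain ⟨i, hi, rfl⟩ := getElem_of_mem hb
  obtain ⟨j, hj, rfl⟩ := getElem_of_mem hx
  simpa [hi, hj] using (hfirst i hi).trans (hfirst j hj).symm

theorem HasPeriod.append_singleton {x : α} (hp : w.HasPeriod p)
    (hx : w[w.length - p]? = some x) : (w ++ [x]).HasPeriod p := by
  obtain ⟨hlt, -⟩ := getElem?_eq_some_iff.1 hx
  rw [hasPeriod_iff_getElem?] at hp ⊢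
  intro i hi
  simp only [length_append, length_singleton] at hi
  rcases Nat.lt_or_ge (i + p) w.length with h | h
  · rw [getElem?_append_left h, getElem?_append_left (by omega)]
    exact hp i (by omega)
  · rw [getElem?_append_left (by omega), getElem?_append_right h,
      show i + p - w.length = 0 by omega, show i = w.length - p by omega, hx]
    rfl

theorem hasPeriod_of_append_eq {t u v : List α} (h : u ++ v = t ++ u) :
    (t ++ u).HasPeriod t.length := by
  rw [HasPeriod, take_left, prefix_append_right_inj, ← h]
  exact prefix_append u v

theorem Palindrome.append_of_append_eq {Q s t : List α} (hQ : Q.Palindrome)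
    (h : Q ++ s = t ++ Q) (ht : t.length ≤ Q.length + 1) : (t ++ Q).Palindrome := by
  refine Palindrome.of_reverse_eq ?_
  rcases append_eq_append_iff.1 h with ⟨m, rfl, rfl⟩ | ⟨c, hc, hc'⟩
  · have hm : m.reverse = m := by
      match m, ht with
      | [], _ => rfl
      | [_], _ => rfl
      | _ :: _ :: _, ht => simp at ht
    simp [hQ.reverse_eq, hm]
  · have hrev : c.reverse ++ t.reverse = c ++ s := by
      rw [← reverse_append, ← hc, hQ.reverse_eq, hc']
    have ht' := (append_inj hrev length_reverse).2
    rw [reverse_append, hQ.reverse_eq, ht', h]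

theorem HasPeriod.getElem?_eq_of_modEq (h : w.HasPeriod p) {i j : ℕ} (hi : i < w.length)
    (hj : j < w.length) (hij : i ≡ j [MOD p]) : w[i]? = w[j]? := by
  rw [← h.getElem?_mod p i w hi, ← h.getElem?_mod p j w hj, show i % p = j % p from hij]

theorem hasPeriod_of_append_pair_eq {P Q : List α} {a b : α}
    (h : P ++ [a, b] ++ Q = Q ++ [b, a] ++ P) :
    (P ++ [a, b] ++ Q).HasPeriod (P.length + 2) ∧ (P ++ [a, b] ++ Q).HasPeriod (Q.length + 2) := by
  constructor
  · simpa using hasPeriod_of_append_eq (t := P ++ [a, b]) (u := Q) (v := [b, a] ++ P)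
      (by simpa using h.symm)
  · rw [h]
    simpa using hasPeriod_of_append_eq (t := Q ++ [b, a]) (u := P) (v := [a, b] ++ Q)
      (by simpa using h)

theorem coprime_of_append_pair_eq {P Q : List α} {a b : α} (hab : a ≠ b)
    (h : P ++ [a, b] ++ Q = Q ++ [b, a] ++ P) : (P.length + 2).Coprime (Q.length + 2) := by
  obtain ⟨hp, hq⟩ := hasPeriod_of_append_pair_eq h
  set g := (P.length + 2).gcd (Q.length + 2)
  by_contra hg
  have hg2 : 2 ≤ g := by
    have : 0 < g := Nat.gcd_pos_of_pos_left _ (by omega)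
    unfold Nat.Coprime at hg
    omega
  have hper : (P ++ [a, b] ++ Q).HasPeriod g := hp.gcd hq (by simp; omega)
  have hmod : P.length ≡ Q.length [MOD g] := Nat.ModEq.add_right_cancel' 2 <|
    (Nat.mod_eq_zero_of_dvd (Nat.gcd_dvd_left _ _)).trans
      (Nat.mod_eq_zero_of_dvd (Nat.gcd_dvd_right _ _)).symm
  have ha : (P ++ [a, b] ++ Q)[P.length]? = some a := by simp
  have hb : (P ++ [a, b] ++ Q)[Q.length]? = some b := by rw [h]; simp
  have := hper.getElem?_eq_of_modEq (by simp) (by simp; omega) hmod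
  exact hab (Option.some.inj (ha.symm.trans (this.trans hb)))

theorem Palindrome.of_append_pair_eq {P Q : List α} {a b c d : α}
    (hw : (P ++ [c, d] ++ Q).Palindrome) (h : P ++ [c, d] ++ Q = Q ++ [a, b] ++ P) :
    P.Palindrome ∧ Q.Palindrome ∧ a = d ∧ b = c := by
  have hrev : Q.reverse ++ [d, c] ++ P.reverse = Q ++ [a, b] ++ P := by
    rw [← h, ← hw.reverse_eq]
    simp
  obtain ⟨hQab, hP⟩ := append_inj hrev (by simp)
  obtain ⟨hQ, hab⟩ := append_inj hQab (by simp)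
  simp only [cons.injEq, and_true] at hab
  exact ⟨.of_reverse_eq hP, .of_reverse_eq hQ, hab.1.symm, hab.2.symm⟩

theorem exists_eq_take_append_pair_append_take (hp : w.HasPeriod p) (hlen : w.length + 2 = p + q)
    (hp2 : 2 ≤ p) (hq2 : 2 ≤ q) : ∃ c d, w = w.take (p - 2) ++ [c, d] ++ w.take (q - 2) := by
  obtain ⟨c, d, hcd⟩ : ∃ c d, (w.drop (p - 2)).take 2 = [c, d] :=
    length_eq_two.1 (by simp; omega)
  have hdrop : w.drop p = w.take (q - 2) := by
    have := prefix_iff_eq_take.1 hp.drop_prefix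
    rwa [length_drop, show w.length - p = q - 2 by omega] at this
  refine ⟨c, d, ?_⟩
  rw [← hcd, ← take_add, Nat.sub_add_cancel hp2, ← hdrop, take_append_drop]

section TwoPeriods

variable (hco : p.Coprime q) (hp : w.HasPeriod p) (hq : w.HasPeriod q)
  (hlen : w.length + 2 = p + q)
include hco hp hq hlen

theorem eq_replicate_of_getElem?_sub_two_eq {x : α} (hxp : w[p - 2]? = some x)
    (hxq : w[q - 2]? = some x) : w = replicate w.length x := by
  have hext : ∀ {r s}, w.HasPeriod r → r + s = p + q → w[s - 2]? = some x →
      (w ++ [x]).HasPeriod r := fun {r s} hr hrs hx =>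
    hr.append_singleton (by rwa [show w.length - r = s - 2 by omega])
  have h1 : (w ++ [x]).HasPeriod 1 := by
    have := (hext hp rfl hxq).gcd (hext hq (add_comm q p) hxp)
      (by rw [hco.gcd_eq_one]; simp; omega)
    rwa [hco.gcd_eq_one] at this
  have := h1.eq_replicate_of_one (mem_append_right w (mem_singleton_self x))
  rw [length_append, length_singleton, replicate_succ'] at this
  exact (append_inj this (by simp)).1

theorem palindrome_of_hasPeriod : w.Palindrome := by
  induction hn : w.length using Nat.strong_induction_on generalizing w p q with
  | _ n ih =>
  wlog hpq : p ≤ q generalizing p q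
  · exact this hco.symm hq hp (by omega) (by omega)
  obtain ⟨rfl⟩ | hp2 : p = 1 ∨ 2 ≤ p := by
    rcases Nat.lt_or_ge p 2 with h | h
    · interval_cases p
      · rw [Nat.coprime_zero_left] at hco
        omega
      · exact .inl rfl
    · exact .inr h
  · cases w with
    | nil => exact .nil
    | cons x t =>
      rw [hp.eq_replicate_of_one mem_cons_self]
      exact .of_reverse_eq reverse_replicate
  have hpq : p < q := by
    refine lt_of_le_of_ne hpq ?_
    rintro rfl
    rw [Nat.coprime_self] at hco
    omega
  have hQ : w.drop p <+: w := hp.drop_prefix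
  have hQpal : (w.drop p).Palindrome :=
    ih _ (by simp; omega) ((Nat.coprime_sub_self_right hpq.le).2 hco) (hp.infix hQ.isInfix)
      (hp.drop_of_hasPeriod_add (by rwa [Nat.sub_add_cancel hpq.le])) (by simp; omega) rfl
  obtain ⟨s, hs⟩ := hQ
  rw [← take_append_drop p w]
  exact hQpal.append_of_append_eq (by rw [hs, take_append_drop]) (by simp; omega)

end TwoPeriods

end List

theorem hasPeriod_iff_list_hasPeriod {w : List Bool} {p : ℕ} :
    HasPeriod w p ↔ w.HasPeriod p := by
  rw [List.hasPeriod_iff_getElem?]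
  exact forall_congr' fun i => ⟨fun h hi => h (by omega), fun h hi => h (by omega)⟩

theorem central_iff {w : List Bool} : Central w ↔
    ∃ p q : ℕ, p.Coprime q ∧ w.HasPeriod p ∧ w.HasPeriod q ∧ w.length + 2 = p + q := by
  simp only [Central, hasPeriod_iff_list_hasPeriod]

theorem central_replicate (x : Bool) (n : ℕ) : Central (List.replicate n x) := by
  refine central_iff.2 ⟨1, n + 1, Nat.coprime_one_left _, ?_, ?_, by simp; omega⟩
  · rw [List.hasPeriod_iff_getElem?]
    intro i hi
    simp only [List.length_replicate] at hi
    simp [show i < n by omega, show i + 1 < n by omega]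
  · exact List.hasPeriod_of_length_le _ _ (by simp)

theorem central_of_prefix {w P : List Bool} {p q : ℕ} (hco : p.Coprime q) (hp : w.HasPeriod p)
    (hq : w.HasPeriod q) (hlen : w.length + 2 = p + q) (hP : P <+: w)
    (hPlen : P.length + 2 = p) : Central P := by
  have hPw : ∀ i < P.length, P[i]? = w[i]? := fun i hi => by
    rw [List.prefix_iff_eq_take.1 hP, List.getElem?_take_of_lt hi]
  have hr : q % p < p := Nat.mod_lt _ (by omega)
  have hrq : q % p ≤ q := Nat.mod_le q p
  refine central_iff.2 ⟨q % p, p - q % p, ?_, ?_, ?_, by omega⟩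
  · rw [Nat.coprime_sub_self_right hr.le, Nat.Coprime, ← Nat.gcd_rec]
    exact hco
  · rw [List.hasPeriod_iff_getElem?]
    intro i hi
    rw [hPw i (by omega), hPw _ (by omega), List.hasPeriod_iff_getElem?.1 hq i (by omega)]
    exact hp.getElem?_eq_of_modEq (by omega) (by omega)
      (Nat.ModEq.add_left i (Nat.mod_modEq q p).symm)
  · rw [List.hasPeriod_iff_getElem?]
    intro i hi
    rw [hPw i (by omega), hPw _ (by omega),
      List.hasPeriod_iff_getElem?.1 hq (i + (p - q % p)) (by omega)]
    refine hp.getElem?_eq_of_modEq (by omega) (by omega) ?_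
    rw [add_assoc, show p - q % p + q = p + (q - q % p) by omega]
    refine (Nat.add_modEq_left_iff.2 ?_).symm
    exact dvd_add dvd_rfl (Nat.dvd_sub_mod q)

theorem central_of_append_pair_eq {P Q : List Bool} {a b : Bool} (hab : a ≠ b)
    (h : P ++ [a, b] ++ Q = Q ++ [b, a] ++ P) :
    Central P ∧ Central Q ∧ (P.length + 2).Coprime (Q.length + 2) := by
  obtain ⟨hp, hq⟩ := List.hasPeriod_of_append_pair_eq h
  have hco := List.coprime_of_append_pair_eq hab h
  have hlen : (P ++ [a, b] ++ Q).length + 2 = (P.length + 2) + (Q.length + 2) := by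
    simp
    omega
  exact ⟨central_of_prefix hco hp hq hlen (by simp) rfl,
    central_of_prefix hco.symm hq hp (by omega) (h ▸ by simp) rfl, hco⟩

theorem exists_palindromes_of_hasPeriod {w : List Bool} {p q : ℕ} (hco : p.Coprime q)
    (hp : w.HasPeriod p) (hq : w.HasPeriod q) (hlen : w.length + 2 = p + q)
    (hw : ¬ ∃ (x : Bool) (n : ℕ), w = List.replicate n x) :
    ∃ P Q : List Bool, P.Palindrome ∧ Q.Palindrome ∧
      w = P ++ [false, true] ++ Q ∧ w = Q ++ [true, false] ++ P := by
  have hne_one : ∀ {r}, w.HasPeriod r → r ≠ 1 := by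
    rintro r hr rfl
    cases w with
    | nil => exact hw ⟨false, 0, rfl⟩
    | cons x t => exact hw ⟨x, _, hr.eq_replicate_of_one List.mem_cons_self⟩
  have two_le : ∀ {r s}, r.Coprime s → w.HasPeriod r → w.HasPeriod s → 2 ≤ r := by
    rintro r s hrs hr hs
    rcases Nat.eq_zero_or_pos r with rfl | hr0
    · exact absurd (Nat.coprime_zero_left _ |>.1 hrs) (hne_one hs)
    · have := hne_one hr
      omega
  have hp2 := two_le hco hp hq
  have hq2 := two_le hco.symm hq hp
  obtain ⟨c, d, h1⟩ := List.exists_eq_take_append_pair_append_take hp hlen hp2 hq2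
  obtain ⟨a, b, h2⟩ := List.exists_eq_take_append_pair_append_take hq (by omega) hq2 hp2
  obtain ⟨hP, hQ, rfl, rfl⟩ := (h1 ▸ List.palindrome_of_hasPeriod hco hp hq hlen).of_append_pair_eq
    (h1.symm.trans h2)
  have hab : b ≠ a := by
    rintro rfl
    refine hw ⟨b, _, List.eq_replicate_of_getElem?_sub_two_eq hco hp hq hlen ?_ ?_⟩
    · rw [h1]
      simp [show p - 2 ≤ w.length by omega]
    · rw [h2]
      simp [show q - 2 ≤ w.length by omega]
  cases a <;> cases b <;> simp only [ne_eq, not_true_eq_false] at hab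
  · exact ⟨_, _, hQ, hP, h2, h1⟩
  · exact ⟨_, _, hP, hQ, h1, h2⟩

/-- Combinatorial structure of central words: `w` is central iff it is a power of a
single letter or `w = P01Q = Q10P` for palindromes `P`, `Q`; moreover in that case
`P` and `Q` are central, `|P|+2` and `|Q|+2` are coprime periods of `w`. -/
theorem stmt4 (w : List Bool) :
    (Central w ↔
      ((∃ (x : Bool) (n : ℕ), w = List.replicate n x) ∨
        ∃ P Q : List Bool, P.Palindrome ∧ Q.Palindrome ∧
          w = P ++ [false, true] ++ Q ∧ w = Q ++ [true, false] ++ P)) ∧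
    (∀ P Q : List Bool, P.Palindrome → Q.Palindrome →
      w = P ++ [false, true] ++ Q → w = Q ++ [true, false] ++ P →
      Central P ∧ Central Q ∧ Nat.Coprime (P.length + 2) (Q.length + 2) ∧
        HasPeriod w (P.length + 2) ∧ HasPeriod w (Q.length + 2)) := by
  have hdecomp : ∀ P Q : List Bool, w = P ++ [false, true] ++ Q → w = Q ++ [true, false] ++ P →
      Central P ∧ Central Q ∧ Nat.Coprime (P.length + 2) (Q.length + 2) ∧
        HasPeriod w (P.length + 2) ∧ HasPeriod w (Q.length + 2) := by
    rintro P Q rfl h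
    obtain ⟨hp, hq⟩ := List.hasPeriod_of_append_pair_eq h
    obtain ⟨hP, hQ, hco⟩ := central_of_append_pair_eq Bool.false_ne_true h
    exact ⟨hP, hQ, hco, hasPeriod_iff_list_hasPeriod.2 hp, hasPeriod_iff_list_hasPeriod.2 hq⟩
  refine ⟨⟨fun hw => ?_, ?_⟩, fun P Q _ _ => hdecomp P Q⟩
  · obtain ⟨p, q, hco, hp, hq, hlen⟩ := central_iff.1 hw
    by_cases hu : ∃ (x : Bool) (n : ℕ), w = List.replicate n x
    · exact .inl hu
    · exact .inr (exists_palindromes_of_hasPeriod hco hp hq hlen hu)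
  · rintro (⟨x, n, rfl⟩ | ⟨P, Q, -, -, h1, h2⟩)
    · exact central_replicate x n
    · obtain ⟨-, -, hco, hp, hq⟩ := hdecomp P Q h1 h2
      exact ⟨_, _, hco, hp, hq, by rw [h1]; simp; omega⟩
end

section
/- A binary word is a primitive lower Christoffel word if and only if it has length 1 or it is of the form 0C1 where C is a central word. -/
/-!
With `n = a + b`, letter `i` of `chr a b` is `1` exactly when `a ≤ i * b % n`. For coprime
`a, b ≥ 1` the inner letters `1, …, n - 2` thus carry the residues `i * b % n`, which run over
`{1, …, n - 1} \ {a}`. If `p * b ≡ 1 [MOD n]`, then passing from `i` to `(i + p) % n` raises the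
residue by one without ever crossing the threshold `a`; on positions this says that the inner
word has the periods `p` and `n - p`, so it is central. Conversely, periods `p` and `q` of a word
of length `p + q - 2` make it constant along the two chains of residues below and above `a`, and
each of the four resulting words is the inner word of a Christoffel word. Finally, `chr a b` is
primitive iff `a` and `b` are coprime: counting letters gives one direction and
`chr (d * a) (d * b) = (chr a b) ^ d` the other.
-/

namespace Nat

theorem div_lt_succ_mul_div_iff {a b : ℕ} (hn : 0 < a + b) (i : ℕ) :
    i * b / (a + b) < (i + 1) * b / (a + b) ↔ a ≤ i * b % (a + b) := by
  have hsplit : (i + 1) * b = (a + b) * (i * b / (a + b)) + (i * b % (a + b) + b) := by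
    linarith [Nat.div_add_mod (i * b) (a + b)]
  rw [hsplit, Nat.mul_add_div hn, lt_add_iff_pos_right, Nat.div_pos_iff]
  omega

theorem eq_of_forall_succ_eq {α : Type*} {g : ℕ → α} {l u : ℕ}
    (h : ∀ s, l ≤ s → s < u → g (s + 1) = g s) {s : ℕ} (hls : l ≤ s) (hsu : s ≤ u) :
    g s = g l := by
  induction s, hls using Nat.le_induction with
  | base => rfl
  | succ s hls ih => rw [h s hls (by omega), ih (by omega)]

section MulMod

variable {n b i j : ℕ}

theorem mul_mod_ne_zero (hb : b.Coprime n) (hi : 0 < i) (hin : i < n) : i * b % n ≠ 0 := by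
  intro h
  have hdvd : n ∣ i := hb.symm.dvd_of_dvd_mul_right (Nat.dvd_of_mod_eq_zero h)
  exact absurd (Nat.le_of_dvd hi hdvd) (by omega)

theorem eq_of_mul_mod_eq (hb : b.Coprime n) (hi : i < n) (hj : j < n)
    (h : i * b % n = j * b % n) : i = j :=
  (ModEq.cancel_right_of_coprime hb.symm h).eq_of_lt_of_lt hi hj

theorem coprime_of_mul_mod_eq_one {p : ℕ} (h : p * b % n = 1) : p.Coprime n := by
  refine coprime_of_mul_modEq_one b ?_
  rcases eq_or_ne n 1 with rfl | hn
  · exact modEq_one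
  · rw [ModEq, h, one_mod_eq_one.mpr hn]

theorem mul_mod_mul_mod_of_mul_mod_eq_one {p : ℕ} (hpb : p * b % n = 1) (hi : i < n) :
    i * p % n * b % n = i := by
  rw [Nat.mod_mul_mod, mul_assoc, Nat.mul_mod, hpb, mul_one, Nat.mod_mod, Nat.mod_eq_of_lt hi]

theorem pred_mul_mod (a : ℕ) (hb : 0 < b) : (a + b - 1) * b % (a + b) = a := by
  obtain ⟨c, rfl⟩ : ∃ c, b = c + 1 := ⟨b - 1, by omega⟩
  rw [show (a + (c + 1) - 1) * (c + 1) = a + (a + (c + 1)) * c by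
      rw [show a + (c + 1) - 1 = a + c by omega]; ring,
    Nat.add_mul_mod_self_left, Nat.mod_eq_of_lt (by omega)]

theorem mul_mod_ne_of_lt_pred {a : ℕ} (hb : 0 < b) (hcop : b.Coprime (a + b))
    (hi : i < a + b - 1) : i * b % (a + b) ≠ a := fun h =>
  absurd (eq_of_mul_mod_eq hcop (by omega) (by omega) (h.trans (pred_mul_mod a hb).symm))
    (by omega)

theorem mul_mod_pos_and_lt_pred {a p : ℕ} (hb : 0 < b) (hpb : p * b % (a + b) = 1)
    (hi : 0 < i) (hin : i < a + b) (hia : i ≠ a) :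
    0 < i * p % (a + b) ∧ i * p % (a + b) < a + b - 1 := by
  have hlt := mod_lt (i * p) (show 0 < a + b by omega)
  refine ⟨pos_of_ne_zero (mul_mod_ne_zero (coprime_of_mul_mod_eq_one hpb) hi hin),
    lt_of_le_of_ne (by omega) fun h => hia ?_⟩
  rw [← mul_mod_mul_mod_of_mul_mod_eq_one hpb hin, h, pred_mul_mod a hb]

theorem mul_sub_mod_of_mod_ne_zero (hbn : b ≤ n) (h : i * b % n ≠ 0) :
    i * (n - b) % n = n - i * b % n := by
  have hn : 0 < n := Nat.pos_of_ne_zero fun hn =>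
    h (by rw [show b = 0 by omega, mul_zero, Nat.zero_mod])
  have hsum : (i * (n - b) % n + i * b % n) % n = 0 := by
    rw [Nat.add_mod_mod, Nat.mod_add_mod, ← mul_add, Nat.sub_add_cancel hbn, Nat.mul_mod_left]
  obtain ⟨c, hc⟩ := Nat.dvd_of_mod_eq_zero hsum
  have h1 := Nat.mod_lt (i * (n - b)) hn
  have h2 := Nat.mod_lt (i * b) hn
  obtain rfl : c = 1 := by
    rcases c with _ | _ | c
    · omega
    · rfl
    · nlinarith
  omega

theorem mul_mod_eq_succ_iff {k : ℕ} (hb : b.Coprime n) (hk : k * b % n = 1) (hj : 0 < j)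
    (hjn : j < n) : j * b % n = i * b % n + 1 ↔ (i + k) % n = j := by
  have hmod : (i + k) % n * b % n = (i * b % n + 1) % n := by
    rw [Nat.mod_mul_mod, add_mul, Nat.add_mod, hk]
  constructor
  · intro h
    refine eq_of_mul_mod_eq hb (Nat.mod_lt _ (by omega)) hjn ?_
    rw [hmod, ← h, Nat.mod_mod]
  · rintro rfl
    have hne := mul_mod_ne_zero hb hj hjn
    rw [hmod] at hne ⊢
    refine Nat.mod_eq_of_lt (lt_of_le_of_ne (Nat.mod_lt _ (by omega)) fun h => hne ?_)
    rw [h, Nat.mod_self]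

theorem le_mul_mod_iff_of_succ {a : ℕ} (hb : 0 < b) (hcop : b.Coprime (a + b))
    (hj : j < a + b - 1) (h : j * b % (a + b) = i * b % (a + b) + 1) :
    a ≤ i * b % (a + b) ↔ a ≤ j * b % (a + b) := by
  have hne := mul_mod_ne_of_lt_pred hb hcop hj
  omega

end MulMod

end Nat

namespace List

theorem count_true_ofFn_lt_succ (f : ℕ → ℕ) (hmono : Monotone f)
    (hstep : ∀ i, f (i + 1) ≤ f i + 1) (n : ℕ) :
    (ofFn fun i : Fin n => decide (f i < f (i + 1))).count true = f n - f 0 := by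
  induction n with
  | zero => simp
  | succ m ih =>
    have h0 := hmono (Nat.zero_le m)
    have h1 := hmono (Nat.le_add_right m 1)
    have h2 := hstep m
    rw [ofFn_succ', concat_eq_append, count_append, count_singleton]
    simp only [Fin.val_castSucc, Fin.val_last, ih, beq_true, decide_eq_true_eq]
    split_ifs <;> omega

theorem getElem?_eq_of_getD_eq {W : List Bool} {k l : ℕ} (hk : k < W.length)
    (hl : l < W.length) (h : W.getD k false = W.getD l false) : W[k]? = W[l]? := by
  rwa [getElem?_eq_getElem hk, getElem?_eq_getElem hl, Option.some_inj,
    ← getD_eq_getElem W false hk, ← getD_eq_getElem W false hl]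

end List

section Christoffel

variable {a b i : ℕ}

theorem chr_eq_ofFn (a b : ℕ) :
    chr a b = List.ofFn fun i : Fin (a + b) => decide (a ≤ i * b % (a + b)) := by
  refine congrArg List.ofFn (funext fun i => ?_)
  simp only [Nat.div_lt_succ_mul_div_iff i.pos]

theorem length_chr (a b : ℕ) : (chr a b).length = a + b :=
  List.length_ofFn

theorem getD_chr (hi : i < a + b) : (chr a b).getD i false = decide (a ≤ i * b % (a + b)) := by
  simp [chr_eq_ofFn, hi]

theorem chr_mul (d a b : ℕ) :
    chr (d * a) (d * b) = (List.replicate d (chr a b)).flatten := by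
  rcases Nat.eq_zero_or_pos d with rfl | hd
  · simp [chr]
  rw [chr_eq_ofFn, chr_eq_ofFn, ← List.ofFn_fin_repeat, List.ofFn_congr (mul_add d a b).symm]
  congr 1
  funext i
  simp only [Fin.repeat_apply, Fin.val_cast, Fin.coe_modNat, Nat.mod_mul_mod, ← mul_add,
    mul_left_comm _ d, Nat.mul_mod_mul_left, Nat.mul_le_mul_left_iff hd]

theorem count_true_chr (a b : ℕ) : (chr a b).count true = b := by
  rcases Nat.eq_zero_or_pos (a + b) with hn | hn
  · obtain ⟨rfl, rfl⟩ : a = 0 ∧ b = 0 := by omega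
    rfl
  have hstep (i : ℕ) : (i + 1) * b / (a + b) ≤ i * b / (a + b) + 1 := by
    rw [← Nat.add_div_right _ hn]
    exact Nat.div_le_div_right (by rw [add_mul, one_mul]; omega)
  rw [chr, List.count_true_ofFn_lt_succ (fun i => i * b / (a + b))
    (fun i j h => Nat.div_le_div_right (Nat.mul_le_mul_right b h)) hstep]
  simp [Nat.mul_div_cancel_left b hn]

theorem count_false_chr (a b : ℕ) : (chr a b).count false = a := by
  have h := List.count_false_add_count_true (chr a b)
  rw [count_true_chr, length_chr] at h
  omega

theorem primitive_chr_iff (a b : ℕ) : Primitive (chr a b) ↔ a.Coprime b := by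
  constructor
  · intro h
    obtain ⟨a', ha'⟩ := Nat.gcd_dvd_left a b
    obtain ⟨b', hb'⟩ := Nat.gcd_dvd_right a b
    refine h (chr a' b') _ ?_
    rw [← chr_mul, ← ha', ← hb']
  · intro hab v k h
    have hcount (x : Bool) : (chr a b).count x = k * v.count x := by
      simp [h, List.count_flatten]
    have hka : k ∣ a := ⟨_, count_false_chr a b ▸ hcount false⟩
    have hkb : k ∣ b := ⟨_, count_true_chr a b ▸ hcount true⟩
    exact Nat.eq_one_of_dvd_one (hab ▸ Nat.dvd_gcd hka hkb)

/-- Positions of `W` are numbered `1, …, n - 2`, as in `false :: (W ++ [true])`. -/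
theorem hasPeriod_and_hasPeriod_sub_iff {W : List Bool} {n p : ℕ} (hW : W.length + 2 = n)
    (hp : p < n) :
    HasPeriod W p ∧ HasPeriod W (n - p) ↔
      ∀ i j, 0 < i → i < n - 1 → 0 < j → j < n - 1 → (i + p) % n = j →
        W.getD (i - 1) false = W.getD (j - 1) false := by
  constructor
  · rintro ⟨hper, hper'⟩ i j hi hin hj hjn hij
    simp only [List.getD_eq_getElem?_getD]
    rcases Nat.lt_or_ge (i + p) n with h | h
    · obtain rfl : j = i + p := by rw [← hij, Nat.mod_eq_of_lt h]
      rw [hper (i - 1) (by omega), show i - 1 + p = i + p - 1 by omega]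
    · obtain rfl : j = i + p - n := by
        rw [← hij, Nat.mod_eq_sub_mod h, Nat.mod_eq_of_lt (by omega)]
      rw [hper' (i + p - n - 1) (by omega), show i + p - n - 1 + (n - p) = i - 1 by omega]
  · intro h
    refine ⟨fun k hk => List.getElem?_eq_of_getD_eq (by omega) hk ?_,
      fun k hk => (List.getElem?_eq_of_getD_eq hk (by omega) ?_).symm⟩
    · simpa using h (k + 1) (k + 1 + p) (by omega) (by omega) (by omega) (by omega)
        (Nat.mod_eq_of_lt (by omega))
    · have hmod : (k + 1 + (n - p) + p) % n = k + 1 := by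
        rw [show k + 1 + (n - p) + p = k + 1 + n by omega, Nat.add_mod_right,
          Nat.mod_eq_of_lt (by omega)]
      simpa [add_right_comm k 1] using h _ _ (by omega) (by omega) (by omega) (by omega) hmod

def chrCenter (a b : ℕ) : List Bool :=
  (chr a b).tail.dropLast

theorem length_chrCenter : (chrCenter a b).length = a + b - 2 := by
  simp only [chrCenter, List.length_dropLast, List.length_tail, length_chr]
  omega

theorem getD_chrCenter (hi : 0 < i) (hin : i < a + b - 1) :
    (chrCenter a b).getD (i - 1) false = decide (a ≤ i * b % (a + b)) := by
  rw [← getD_chr (by omega)]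
  simp only [chrCenter, List.getD_eq_getElem?_getD, List.getElem?_dropLast, List.getElem?_tail,
    List.length_tail, length_chr]
  rw [if_pos (by omega), Nat.sub_add_cancel hi]

theorem chr_eq_cons_chrCenter (ha : 0 < a) (hb : 0 < b) :
    chr a b = false :: (chrCenter a b ++ [true]) := by
  have hne : chr a b ≠ [] := List.ne_nil_of_length_pos (by rw [length_chr]; omega)
  have htl : (chr a b).tail ≠ [] :=
    List.ne_nil_of_length_pos (by rw [List.length_tail, length_chr]; omega)
  have hhead : (chr a b).head hne = false := by
    rw [List.head_eq_getElem, ← List.getD_eq_getElem _ false, getD_chr (by omega)]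
    simpa using ha.ne'
  have hlast : (chr a b).tail.getLast htl = true := by
    rw [List.getLast_eq_getElem, List.getElem_tail, ← List.getD_eq_getElem _ false,
      getD_chr (by rw [List.length_tail, length_chr]; omega)]
    simp [length_chr, show a + b - 1 - 1 + 1 = a + b - 1 by omega, Nat.pred_mul_mod a hb]
  rw [chrCenter, ← hhead, ← hlast, List.dropLast_append_getLast, List.cons_head_tail]

theorem eq_chrCenter_of_getD {C : List Bool} (hlen : C.length + 2 = a + b)
    (h : ∀ i, 0 < i → i < a + b - 1 → C.getD (i - 1) false = decide (a ≤ i * b % (a + b))) :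
    C = chrCenter a b := by
  apply List.ext_getElem (by rw [length_chrCenter]; omega)
  intro k hk hk'
  rw [← List.getD_eq_getElem _ false hk, ← List.getD_eq_getElem _ false hk']
  simpa using (h (k + 1) (by omega) (by omega)).trans
    (getD_chrCenter (i := k + 1) (by omega) (by omega)).symm

theorem central_chrCenter (ha : 0 < a) (hb : 0 < b) (hab : a.Coprime b) :
    Central (chrCenter a b) := by
  have hcop : b.Coprime (a + b) := Nat.coprime_add_self_right.mpr hab.symm
  obtain ⟨p, hpn, hbp⟩ := Nat.exists_mul_mod_eq_one_of_coprime hcop (by omega)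
  have hpb : p * b % (a + b) = 1 := by rwa [mul_comm]
  have hp : p.Coprime (a + b) := Nat.coprime_of_mul_mod_eq_one hpb
  have hlen : (chrCenter a b).length + 2 = a + b := by rw [length_chrCenter]; omega
  obtain ⟨hper, hper'⟩ := (hasPeriod_and_hasPeriod_sub_iff hlen hpn).mpr
    fun i j hi hin hj hjn hij => by
      rw [getD_chrCenter hi hin, getD_chrCenter hj hjn]
      exact decide_eq_decide.mpr (Nat.le_mul_mod_iff_of_succ hb hcop hjn
        ((Nat.mul_mod_eq_succ_iff hcop hpb hj (by omega)).mpr hij))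
  exact ⟨p, a + b - p, (Nat.coprime_sub_self_right hpn.le).mpr hp, hper, hper', by omega⟩

theorem apply_eq_ite_of_add_mod_eq {α : Type*} {f : ℕ → α} {p : ℕ} (hb : 0 < b)
    (hpn : p < a + b) (hpb : p * b % (a + b) = 1)
    (hf : ∀ i j, 0 < i → i < a + b - 1 → 0 < j → j < a + b - 1 → (i + p) % (a + b) = j →
      f i = f j)
    (hi : 0 < i) (hin : i < a + b - 1) :
    f i = if i * b % (a + b) < a then f p else f (a + b - p) := by
  have hbp : b * p % (a + b) = 1 := by rwa [mul_comm]
  have hcop : b.Coprime (a + b) := Nat.coprime_of_mul_mod_eq_one hbp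
  set n := a + b
  -- `s ↦ s * p % n` inverts `i ↦ i * b % n`; by `hf`, `f` agrees at the images of `s` and
  -- `s + 1` unless `s` or `s + 1` is `a`, whose image is the end position `n - 1`.
  have hstep (s : ℕ) (hs : 0 < s) (hsn : s + 1 < n) (hsa : s ≠ a) (hsa' : s + 1 ≠ a) :
      f ((s + 1) * p % n) = f (s * p % n) := by
    obtain ⟨h1, h2⟩ := Nat.mul_mod_pos_and_lt_pred hb hpb hs (by omega) hsa
    obtain ⟨h3, h4⟩ := Nat.mul_mod_pos_and_lt_pred hb hpb (by omega) hsn hsa'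
    refine (hf _ _ h1 h2 h3 h4 ?_).symm
    rw [Nat.mod_add_mod, add_mul, one_mul]
  set s := i * b % n
  have hs0 : 0 < s := Nat.pos_of_ne_zero (Nat.mul_mod_ne_zero hcop hi (by omega))
  have hsn : s < n := Nat.mod_lt _ (by omega)
  have hsa : s ≠ a := Nat.mul_mod_ne_of_lt_pred hb hcop hin
  have hfi : f i = f (s * p % n) := by
    rw [Nat.mul_mod_mul_mod_of_mul_mod_eq_one hbp (by omega)]
  split_ifs with hlow
  · rw [hfi, Nat.eq_of_forall_succ_eq (g := fun s => f (s * p % n)) (l := 1) (u := a - 1)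
      (fun t ht htu => hstep t ht (by omega) (by omega) (by omega)) hs0 (by omega),
      one_mul, Nat.mod_eq_of_lt hpn]
  · have hchain (t : ℕ) (h1 : a + 1 ≤ t) (h2 : t ≤ n - 1) :
        f (t * p % n) = f ((a + 1) * p % n) :=
      Nat.eq_of_forall_succ_eq (g := fun s => f (s * p % n))
        (fun t ht htu => hstep t (by omega) (by omega) (by omega) (by omega)) h1 h2
    have hqp : (n - 1) * p % n = n - p := by
      have := Nat.pred_mul_mod (b := p) (n - p) (Nat.pos_of_ne_zero fun h => by simp [h] at hpb)
      rwa [Nat.sub_add_cancel hpn.le] at this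
    rw [hfi, hchain s (by omega) (by omega), ← hchain (n - 1) (by omega) le_rfl, hqp]

theorem exists_eq_chrCenter_of_getD_eq_ite {C : List Bool} (ha : 0 < a) (hb : 0 < b)
    (hcop : b.Coprime (a + b)) (hlen : C.length + 2 = a + b) (x y : Bool)
    (hval : ∀ i, 0 < i → i < a + b - 1 →
      C.getD (i - 1) false = if i * b % (a + b) < a then x else y) :
    ∃ a' b', 0 < a' ∧ 0 < b' ∧ a'.Coprime b' ∧ C = chrCenter a' b' := by
  have hba : b.Coprime a := Nat.coprime_add_self_right.mp hcop
  cases x <;> cases y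
  · refine ⟨a + b - 1, 1, by omega, one_pos, Nat.coprime_one_right _,
      eq_chrCenter_of_getD (by omega) fun i hi hin => ?_⟩
    rw [Nat.sub_add_cancel (by omega : 1 ≤ a + b)] at hin ⊢
    rw [hval i hi hin, mul_one, Nat.mod_eq_of_lt (a := i) (by omega)]
    simp only [ite_self, false_eq_decide_iff, not_le]
    omega
  · refine ⟨a, b, ha, hb, hba.symm, eq_chrCenter_of_getD hlen fun i hi hin => ?_⟩
    have := Nat.mul_mod_ne_of_lt_pred hb hcop hin
    rw [hval i hi hin]
    split_ifs <;> simp only [false_eq_decide_iff, true_eq_decide_iff, not_le] <;> omega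
  · refine ⟨b, a, hb, ha, hba, eq_chrCenter_of_getD (by omega) fun i hi hin => ?_⟩
    rw [add_comm b a] at hin ⊢
    have := Nat.mul_mod_ne_of_lt_pred hb hcop hin
    rw [hval i hi hin, show i * a = i * (a + b - b) by rw [Nat.add_sub_cancel],
      Nat.mul_sub_mod_of_mod_ne_zero (by omega) (Nat.mul_mod_ne_zero hcop hi (by omega))]
    split_ifs <;> simp only [false_eq_decide_iff, true_eq_decide_iff, not_le] <;> omega
  · refine ⟨1, a + b - 1, one_pos, by omega, Nat.coprime_one_left _,
      eq_chrCenter_of_getD (by omega) fun i hi hin => ?_⟩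
    rw [Nat.add_sub_cancel' (by omega : 1 ≤ a + b)] at hin ⊢
    rw [hval i hi hin, Nat.mul_sub_mod_of_mod_ne_zero (by omega)
      (Nat.mul_mod_ne_zero (Nat.coprime_one_left _) hi (by omega))]
    have := Nat.mod_lt i (show 0 < a + b by omega)
    simp only [ite_self, mul_one, true_eq_decide_iff]
    omega

theorem Central.exists_eq_chrCenter {C : List Bool} (hC : Central C) :
    ∃ a b, 0 < a ∧ 0 < b ∧ a.Coprime b ∧ C = chrCenter a b := by
  obtain ⟨p, q, hpq, hper, hper', hlen⟩ := hC
  have hp0 : 0 < p := Nat.pos_of_ne_zero fun h => by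
    rw [h, Nat.coprime_zero_left] at hpq; omega
  have hq0 : 0 < q := Nat.pos_of_ne_zero fun h => by
    rw [h, Nat.coprime_zero_right] at hpq; omega
  have hp : p.Coprime (p + q) := by rw [add_comm]; exact Nat.coprime_add_self_right.mpr hpq
  obtain ⟨b, hbn, hpb⟩ := Nat.exists_mul_mod_eq_one_of_coprime hp (by omega)
  obtain ⟨a, hab⟩ : ∃ a, a + b = p + q := ⟨p + q - b, by omega⟩
  rw [← hab] at hp hpb hlen
  have hb : 0 < b := Nat.pos_of_ne_zero fun h => by simp [h] at hpb
  have hcop : b.Coprime (a + b) := Nat.coprime_of_mul_mod_eq_one (by rwa [mul_comm])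
  rw [show q = a + b - p by omega] at hper'
  have hf := (hasPeriod_and_hasPeriod_sub_iff hlen (by omega)).mp ⟨hper, hper'⟩
  exact exists_eq_chrCenter_of_getD_eq_ite (by omega) hb hcop hlen _ _ fun i hi hin =>
    apply_eq_ite_of_add_mod_eq (f := fun i => C.getD (i - 1) false) hb (by omega) hpb hf hi hin

end Christoffel

/-- A word is a primitive lower Christoffel word iff it has length 1 or is of the
form `0C1` for a central word `C`. -/
theorem stmt6 (w : List Bool) :
    (Primitive w ∧ ∃ a b : ℕ, ¬(a = 0 ∧ b = 0) ∧ w = chr a b) ↔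
      (w.length = 1 ∨ ∃ C : List Bool, Central C ∧ w = false :: (C ++ [true])) := by
  constructor
  · rintro ⟨hw, a, b, -, rfl⟩
    have hab := (primitive_chr_iff a b).mp hw
    rcases Nat.eq_zero_or_pos a with rfl | ha
    · exact Or.inl (by rw [length_chr, (Nat.coprime_zero_left b).mp hab])
    rcases Nat.eq_zero_or_pos b with rfl | hb
    · exact Or.inl (by rw [length_chr, (Nat.coprime_zero_right a).mp hab])
    exact Or.inr ⟨chrCenter a b, central_chrCenter ha hb hab, chr_eq_cons_chrCenter ha hb⟩
  · have hchr {a b : ℕ} (hab : a.Coprime b) :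
        Primitive (chr a b) ∧ ∃ a' b' : ℕ, ¬(a' = 0 ∧ b' = 0) ∧ chr a b = chr a' b' :=
      ⟨(primitive_chr_iff a b).mpr hab, a, b, by rintro ⟨rfl, rfl⟩; simp at hab, rfl⟩
    rintro (hw | ⟨C, hC, rfl⟩)
    · obtain ⟨x, rfl⟩ := List.length_eq_one_iff.mp hw
      cases x
      · exact hchr (a := 1) (b := 0) (Nat.coprime_one_left 0)
      · exact hchr (a := 0) (b := 1) (Nat.coprime_one_right 0)
    · obtain ⟨a, b, ha, hb, hab, rfl⟩ := hC.exists_eq_chrCenter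
      rw [← chr_eq_cons_chrCenter ha hb]
      exact hchr hab
end

section
/- For all coprime positive integers a, b, the lower Christoffel word w_{a,b} is the lexicographically smallest word among all balanced words over {0,1} having Parikh vector (a,b). -/
namespace Stmt9Aux

/-- number of `true`s in the window of `w` of length `L` starting at `i`. -/
def cntW (w : List Bool) (i L : ℕ) : ℕ := (((w.drop i).take L).count true)

/-- prefix count. -/
def FW (w : List Bool) (m : ℕ) : ℕ := ((w.take m).count true)

lemma count_false_add_count_true (l : List Bool) :
    l.count false + l.count true = l.length := by
  induction l with
  | nil => simp
  | cons x t ih => cases x <;> simp [List.count_cons] <;> omega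

lemma FW_add (w : List Bool) (i L : ℕ) : FW w (i + L) = FW w i + cntW w i L := by
  unfold FW cntW
  rw [List.take_add, List.count_append]

lemma cntW_add (w : List Bool) (i K L : ℕ) :
    cntW w i (K + L) = cntW w i K + cntW w (i + K) L := by
  unfold cntW
  rw [List.take_add, List.count_append, List.drop_drop]

lemma window_infix (w : List Bool) (i L : ℕ) : ((w.drop i).take L) <:+: w :=
  ((w.drop i).take_prefix L).isInfix.trans (w.drop_suffix i).isInfix

lemma window_length (w : List Bool) {i L : ℕ} (h : i + L ≤ w.length) :
    ((w.drop i).take L).length = L := by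
  simp [List.length_take, List.length_drop]
  omega

/-- balance applied to two windows -/
lemma bal_pair {w : List Bool} (hb : Balanced01 w) {i j L : ℕ}
    (hi : i + L ≤ w.length) (hj : j + L ≤ w.length) :
    cntW w i L ≤ cntW w j L + 1 := by
  have h := hb ((w.drop i).take L) ((w.drop j).take L)
    (window_infix w i L) (window_infix w j L)
    (by rw [window_length w hi, window_length w hj])
  unfold cntW
  omega

/-- min window count -/
noncomputable def eW (w : List Bool) (L : ℕ) : ℕ :=
  (Finset.range (w.length - L + 1)).inf' (by simp) (fun i => cntW w i L)

/-- max window count -/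
noncomputable def EW (w : List Bool) (L : ℕ) : ℕ :=
  (Finset.range (w.length - L + 1)).sup' (by simp) (fun i => cntW w i L)

lemma eW_le {w : List Bool} {i L : ℕ} (h : i + L ≤ w.length) :
    eW w L ≤ cntW w i L := by
  unfold eW
  exact Finset.inf'_le _ (by simp only [Finset.mem_range]; omega)

lemma le_EW {w : List Bool} {i L : ℕ} (h : i + L ≤ w.length) :
    cntW w i L ≤ EW w L := by
  unfold EW
  apply Finset.le_sup' (f := fun i => cntW w i L)
  simp only [Finset.mem_range]
  omega

lemma exists_eW (w : List Bool) {L : ℕ} (hL : L ≤ w.length) :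
    ∃ i, i + L ≤ w.length ∧ eW w L = cntW w i L := by
  unfold eW
  obtain ⟨i, hi, he⟩ := Finset.exists_mem_eq_inf'
    (s := Finset.range (w.length - L + 1)) (by simp) (fun i => cntW w i L)
  exact ⟨i, by simp only [Finset.mem_range] at hi; omega, he⟩

lemma exists_EW (w : List Bool) {L : ℕ} (hL : L ≤ w.length) :
    ∃ i, i + L ≤ w.length ∧ EW w L = cntW w i L := by
  unfold EW
  obtain ⟨i, hi, he⟩ := Finset.exists_mem_eq_sup'
    (s := Finset.range (w.length - L + 1)) (by simp) (fun i => cntW w i L)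
  exact ⟨i, by simp only [Finset.mem_range] at hi; omega, he⟩

lemma EW_le_eW {w : List Bool} (hb : Balanced01 w) {L : ℕ} (hL : L ≤ w.length) :
    EW w L ≤ eW w L + 1 := by
  obtain ⟨i, hi, hie⟩ := exists_EW w hL
  obtain ⟨j, hj, hje⟩ := exists_eW w hL
  rw [hie, hje]
  exact bal_pair hb hi hj

lemma eW_super {w : List Bool} {K L : ℕ} (h : K + L ≤ w.length) :
    eW w K + eW w L ≤ eW w (K + L) := by
  obtain ⟨i, hi, he⟩ := exists_eW w (L := K + L) (by omega)
  rw [he, cntW_add]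
  have h1 : eW w K ≤ cntW w i K := eW_le (by omega)
  have h2 : eW w L ≤ cntW w (i + K) L := eW_le (by omega)
  omega

lemma EW_sub {w : List Bool} {K L : ℕ} (h : K + L ≤ w.length) :
    EW w (K + L) ≤ EW w K + EW w L := by
  obtain ⟨i, hi, he⟩ := exists_EW w (L := K + L) (by omega)
  rw [he, cntW_add]
  have h1 : cntW w i K ≤ EW w K := le_EW (by omega)
  have h2 : cntW w (i + K) L ≤ EW w L := le_EW (by omega)
  omega

/-- The key cross inequality. -/
lemma lemB {w : List Bool} (hb : Balanced01 w) :
    ∀ s K L : ℕ, K + L = s → 1 ≤ K → K ≤ w.length → 1 ≤ L → L ≤ w.length →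
      L * EW w K + 1 ≤ K * eW w L + K + L := by
  intro s
  induction s using Nat.strong_induction_on with
  | _ s ih =>
    intro K L hs hK1 hKn hL1 hLn
    rcases lt_trichotomy K L with hlt | heq | hgt
    · -- K < L : L = K + d
      obtain ⟨d, rfl⟩ : ∃ d, L = K + d := ⟨L - K, by omega⟩
      have hd1 : 1 ≤ d := by omega
      have hIH : d * EW w K + 1 ≤ K * eW w d + K + d :=
        ih (K + d) (by omega) K d rfl hK1 hKn hd1 (by omega)
      have hsuper : eW w K + eW w d ≤ eW w (K + d) := eW_super (by omega)
      have hbal : EW w K ≤ eW w K + 1 := EW_le_eW hb hKn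
      nlinarith [hIH, hsuper, hbal]
    · -- K = L
      subst heq
      have hbal : EW w K ≤ eW w K + 1 := EW_le_eW hb hKn
      nlinarith [hbal]
    · -- K > L : K = L + d
      obtain ⟨d, rfl⟩ : ∃ d, K = L + d := ⟨K - L, by omega⟩
      have hd1 : 1 ≤ d := by omega
      have hIH : L * EW w d + 1 ≤ d * eW w L + d + L :=
        ih (d + L) (by omega) d L rfl hd1 (by omega) hL1 hLn
      have hsub : EW w (d + L) ≤ EW w d + EW w L := EW_sub (by omega)
      have hbal : EW w L ≤ eW w L + 1 := EW_le_eW hb hLn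
      have : EW w (L + d) = EW w (d + L) := by rw [Nat.add_comm]
      nlinarith [hIH, hsub, hbal, this]

/-- The prefix-count claim: any prefix of a balanced word has at least
`⌊m·b/n⌋` ones (in the sharp integer form `m·b + 1 ≤ n·F(m) + n`). -/
lemma claim {w : List Bool} (hb : Balanced01 w) {m : ℕ}
    (hm1 : 1 ≤ m) (hmn : m + 1 ≤ w.length) :
    m * (w.count true) + 1 ≤ w.length * FW w m + w.length := by
  set n := w.length with hn
  set M := n - m with hM
  have hMm : m + M = n := by omega
  have hM1 : 1 ≤ M := by omega
  -- e m ≤ F m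
  have h1 : eW w m ≤ FW w m := by
    have : cntW w 0 m = FW w m := by unfold cntW FW; simp
    have := eW_le (w := w) (i := 0) (L := m) (by omega)
    omega
  -- b = F m + cnt m M
  have h2 : w.count true = FW w m + cntW w m M := by
    have : FW w n = w.count true := by unfold FW; rw [hn, List.take_length]
    rw [← this, ← hMm, FW_add]
  have h3 : cntW w m M ≤ EW w M := le_EW (by omega)
  have h4 : m * EW w M + 1 ≤ M * eW w m + M + m :=
    lemB hb (M + m) M m rfl hM1 (by omega) hm1 (by omega)
  nlinarith [h1, h2, h3, h4, hMm]

end Stmt9Aux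

namespace Stmt9Aux

/-! ### Generic list/lex helpers -/

lemma infix_window {u w : List Bool} (h : u <:+: w) :
    ∃ i, i + u.length ≤ w.length ∧ u = (w.drop i).take u.length := by
  obtain ⟨s, t, rfl⟩ := h
  refine ⟨s.length, by simp, ?_⟩
  rw [List.append_assoc, List.drop_left, List.take_left]

lemma lex_trichotomy (x : List Bool) : ∀ y : List Bool,
    x = y ∨ List.Lex (·<·) x y ∨ List.Lex (·<·) y x := by
  induction x with
  | nil => intro y; cases y with
    | nil => exact .inl rfl
    | cons b ys => exact .inr (.inl List.Lex.nil)
  | cons a xs ih =>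
    intro y; cases y with
    | nil => exact .inr (.inr List.Lex.nil)
    | cons b ys =>
      by_cases hab : a = b
      · subst hab
        rcases ih ys with h | h | h
        · exact .inl (by rw [h])
        · exact .inr (.inl (List.Lex.cons h))
        · exact .inr (.inr (List.Lex.cons h))
      · cases a <;> cases b <;> simp at hab
        · exact .inr (.inl (List.Lex.rel (by decide)))
        · exact .inr (.inr (List.Lex.rel (by decide)))

lemma lex_decomp {x y : List Bool} (h : List.Lex (·<·) x y) (hlen : x.length = y.length) :
    ∃ p s t, x = p ++ false :: s ∧ y = p ++ true :: t := by
  induction h with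
  | nil => simp at hlen
  | @rel a as b bs hab =>
    obtain ⟨ha, hb⟩ := Bool.lt_iff.mp hab
    subst ha; subst hb
    exact ⟨[], as, bs, rfl, rfl⟩
  | @cons a as bs h ih =>
    obtain ⟨p, s, t, hx, hy⟩ := ih (by simpa using hlen)
    exact ⟨a :: p, s, t, by simp [hx], by simp [hy]⟩

/-! ### Nat division helpers -/

lemma div_super {n : ℕ} (hn : 0 < n) (x y : ℕ) : x / n + y / n ≤ (x + y) / n := by
  rw [Nat.le_div_iff_mul_le hn, Nat.add_mul]
  exact Nat.add_le_add (Nat.div_mul_le_self x n) (Nat.div_mul_le_self y n)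

lemma div_sub1 {n : ℕ} (hn : 0 < n) (x y : ℕ) : (x + y) / n ≤ x / n + y / n + 1 := by
  have hgoal : (x + y) / n < x / n + y / n + 2 := by
    rw [Nat.div_lt_iff_lt_mul hn]
    have hx := Nat.div_add_mod x n
    have hy := Nat.div_add_mod y n
    have hx2 : x % n < n := Nat.mod_lt x hn
    have hy2 : y % n < n := Nat.mod_lt y hn
    nlinarith
  omega

lemma div_step_le {n x y : ℕ} (hn : 0 < n) (hxy : y ≤ x + n) : y / n ≤ x / n + 1 := by
  calc y / n ≤ (x + n) / n := Nat.div_le_div_right hxy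
  _ = x / n + 1 := Nat.add_div_right x hn

/-! ### Christoffel word basics -/

lemma chr_length (a b : ℕ) : (chr a b).length = a + b := by simp [chr]

lemma chr_getElem (a b : ℕ) {m : ℕ} (hm : m < a + b) :
    (chr a b)[m]'(by simpa [chr_length]) =
      decide (m * b / (a + b) < (m + 1) * b / (a + b)) := by
  unfold chr
  rw [List.getElem_ofFn]

lemma chr_FW {a b : ℕ} (ha : 0 < a) : ∀ m, m ≤ a + b →
    FW (chr a b) m = m * b / (a + b) := by
  have hn : 0 < a + b := by omega
  intro m
  induction m with
  | zero => intro _; simp [FW]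
  | succ m ih =>
    intro hm
    have hm' : m < a + b := by omega
    have hup : (m + 1) * b / (a + b) ≤ m * b / (a + b) + 1 := by
      apply div_step_le hn
      have : (m + 1) * b = m * b + b := by ring
      omega
    have hmono : m * b / (a + b) ≤ (m + 1) * b / (a + b) :=
      Nat.div_le_div_right (by nlinarith)
    unfold FW
    rw [List.take_succ, List.count_append,
      List.getElem?_eq_getElem (by simpa [chr_length]), chr_getElem a b hm']
    have hFW := ih (by omega)
    unfold FW at hFW
    by_cases hlt : m * b / (a + b) < (m + 1) * b / (a + b)
    · simp [hlt, hFW] <;> omega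
    · simp [hlt, hFW] <;> omega

lemma chr_count_true {a b : ℕ} (ha : 0 < a) : (chr a b).count true = b := by
  have hn : 0 < a + b := by omega
  have h := chr_FW (b := b) ha (a + b) le_rfl
  unfold FW at h
  rw [← chr_length a b, List.take_length, chr_length] at h
  rw [h, Nat.mul_comm, Nat.mul_div_cancel _ hn]

lemma chr_count_false {a b : ℕ} (ha : 0 < a) : (chr a b).count false = a := by
  have h1 := count_false_add_count_true (chr a b)
  rw [chr_count_true ha, chr_length] at h1
  omega

lemma chr_window {a b : ℕ} (ha : 0 < a) {i L : ℕ} (h : i + L ≤ a + b) :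
    L * b / (a + b) ≤ cntW (chr a b) i L ∧
      cntW (chr a b) i L ≤ L * b / (a + b) + 1 := by
  have hn : 0 < a + b := by omega
  have hadd := FW_add (chr a b) i L
  rw [chr_FW ha (i + L) h, chr_FW ha i (by omega)] at hadd
  have hsplit : (i + L) * b = i * b + L * b := by ring
  have h1 : i * b / (a + b) + L * b / (a + b) ≤ (i + L) * b / (a + b) := by
    rw [hsplit]; exact div_super hn _ _
  have h2 : (i + L) * b / (a + b) ≤ i * b / (a + b) + L * b / (a + b) + 1 := by
    rw [hsplit]; exact div_sub1 hn _ _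
  omega

lemma chr_balanced {a b : ℕ} (ha : 0 < a) : Balanced01 (chr a b) := by
  intro u v hu hv hlen
  obtain ⟨i, hi, hueq⟩ := infix_window hu
  obtain ⟨j, hj, hveq⟩ := infix_window hv
  rw [chr_length] at hi hj
  rw [← hlen] at hveq hj
  have hu' : u.count true = cntW (chr a b) i u.length := congrArg (List.count true) hueq
  have hv' : v.count true = cntW (chr a b) j u.length := congrArg (List.count true) hveq
  obtain ⟨hwi1, hwi2⟩ := chr_window ha hi
  obtain ⟨hwj1, hwj2⟩ := chr_window ha hj
  rw [hu', hv']
  push_cast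
  omega

end Stmt9Aux

/-- For coprime positive integers `a`, `b`, the lower Christoffel word `w_{a,b}` is
the lexicographically smallest balanced word with Parikh vector `(a, b)`. -/
theorem stmt9 {a b : ℕ} (ha : 0 < a) (hb : 0 < b) (hab : Nat.Coprime a b) :
    Balanced01 (chr a b) ∧ (chr a b).count false = a ∧ (chr a b).count true = b ∧
    ∀ w : List Bool, Balanced01 w → w.count false = a → w.count true = b →
      w = chr a b ∨ List.Lex (· < ·) (chr a b) w := by
  have hn : 0 < a + b := by omega
  refine ⟨Stmt9Aux.chr_balanced ha, Stmt9Aux.chr_count_false ha,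
    Stmt9Aux.chr_count_true ha, ?_⟩
  intro w hwbal hwf hwt
  have hwlen : w.length = a + b := by
    rw [← Stmt9Aux.count_false_add_count_true w, hwf, hwt]
  rcases Stmt9Aux.lex_trichotomy w (chr a b) with heq | hlt | hgt
  · exact .inl heq
  · -- w < chr : impossible
    exfalso
    obtain ⟨p, s, t, hw, hc⟩ := Stmt9Aux.lex_decomp hlt
      (by rw [hwlen, Stmt9Aux.chr_length])
    set n := a + b with hndef
    set m := p.length + 1 with hmdef
    set c₀ := p.count true with hc₀
    have hFw : Stmt9Aux.FW w m = c₀ := by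
      unfold Stmt9Aux.FW
      rw [hw, show p ++ false :: s = (p ++ [false]) ++ s by simp,
        show m = (p ++ [false]).length by simp [hmdef],
        List.take_left, List.count_append]
      simp [hc₀]
    have hFc : Stmt9Aux.FW (chr a b) m = c₀ + 1 := by
      unfold Stmt9Aux.FW
      rw [hc, show p ++ true :: t = (p ++ [true]) ++ t by simp,
        show m = (p ++ [true]).length by simp [hmdef],
        List.take_left, List.count_append]
      simp [hc₀]
    have hmn : m ≤ n := by
      have := Stmt9Aux.chr_length a b
      rw [hc] at this
      simp at this
      omega
    rcases eq_or_lt_of_le hmn with hmeq | hmlt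
    · -- m = n : then s = t = [], counts contradict
      have hslen : s.length = 0 := by
        have := hwlen; rw [hw] at this; simp at this; omega
      have htlen : t.length = 0 := by
        have := Stmt9Aux.chr_length a b; rw [hc] at this; simp at this; omega
      have hs : s = [] := List.length_eq_zero_iff.mp hslen
      have ht : t = [] := List.length_eq_zero_iff.mp htlen
      subst hs; subst ht
      have h1 : w.count true = c₀ := by rw [hw]; simp [List.count_append, hc₀]
      have h2 : (chr a b).count true = c₀ + 1 := by
        rw [hc]; simp [List.count_append, hc₀]
      rw [Stmt9Aux.chr_count_true ha] at h2
      omega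
    · -- m < n : use the prefix-count claim
      have hclaim := Stmt9Aux.claim hwbal (m := m) (by omega) (by omega)
      rw [hwlen, hwt, hFw] at hclaim
      -- hclaim : m * b + 1 ≤ n * c₀ + n
      have hchr := Stmt9Aux.chr_FW (b := b) ha m (by omega)
      rw [hFc] at hchr
      -- hchr : c₀ + 1 = m * b / n
      have hge : (c₀ + 1) * n ≤ m * b := (Nat.le_div_iff_mul_le hn).mp hchr.le
      nlinarith [hclaim, hge]
  · exact .inr hgt
end

section
/- Let (a,b) and (c,d) be pairs of nonnegative integers, both distinct from (0,0), such that b/a ≠ d/c (as extended rationals, with slope ∞ when the first coordinate is 0). Then the lower Christoffel word w_{a,b} is lexicographically smaller than w_{c,d} if and only if b/a < d/c. -/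
private lemma lexAux : ∀ (i : ℕ) (l1 l2 : List Bool),
    (∀ j, j < i → l1[j]? = l2[j]?) →
    ((l1[i]? = none ∧ l2[i]? ≠ none) ∨ (l1[i]? = some false ∧ l2[i]? = some true)) →
    List.Lex (· < ·) l1 l2 := by
  intro i
  induction i with
  | zero =>
    intro l1 l2 _ h
    match l1, l2 with
    | [], [] => simp at h
    | [], y :: t2 => exact List.Lex.nil
    | x :: t1, [] => simp at h
    | x :: t1, y :: t2 =>
      rcases h with ⟨h1, _⟩ | ⟨h1, h2⟩
      · simp at h1
      · simp only [List.getElem?_cons_zero, Option.some.injEq] at h1 h2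
        subst h1; subst h2
        exact List.Lex.rel (by simp)
  | succ i ih =>
    intro l1 l2 hag h
    match l1, l2 with
    | [], [] => simp at h
    | [], y :: t2 => exact List.Lex.nil
    | x :: t1, [] => rcases h with ⟨_, h1⟩ | ⟨_, h1⟩ <;> simp at h1
    | x :: t1, y :: t2 =>
      have hx : x = y := by
        have := hag 0 (Nat.succ_pos i); simpa using this
      subst hx
      refine List.Lex.cons (ih t1 t2 (fun j hj => ?_) ?_)
      · have := hag (j+1) (by omega); simpa using this
      · simpa using h

private lemma chr_get (a b i : ℕ) (hi : i < a + b) :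
    (chr a b)[i]? = some (decide (i * b / (a + b) < (i + 1) * b / (a + b))) := by
  rw [chr, List.getElem?_eq_getElem (by simpa using hi)]
  simp [List.getElem_ofFn]

private lemma chr_lex_of_lt {a b c d : ℕ} (h : b * c < a * d) :
    List.Lex (· < ·) (chr a b) (chr c d) := by
  have had : 0 < a * d := lt_of_le_of_lt (Nat.zero_le _) h
  have ha : 0 < a := Nat.pos_of_ne_zero (by rintro rfl; simp at had)
  have hd : 0 < d := Nat.pos_of_ne_zero (by rintro rfl; simp at had)
  have hn : 0 < a + b := by omega
  have hm : 0 < c + d := by omega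
  -- floor comparison
  have key : ∀ k, k * b / (a + b) ≤ k * d / (c + d) := by
    intro k
    have h1 : k * b * (c + d) ≤ k * d * (a + b) := by nlinarith
    calc k * b / (a + b) = k * b * (c + d) / ((a + b) * (c + d)) :=
          (Nat.mul_div_mul_right _ _ hm).symm
      _ ≤ k * d * (a + b) / ((a + b) * (c + d)) := Nat.div_le_div_right h1
      _ = k * d * (a + b) / ((c + d) * (a + b)) := by rw [mul_comm (a + b)]
      _ = k * d / (c + d) := Nat.mul_div_mul_right _ _ hn
  -- step bounds
  have step : ∀ (x y k : ℕ), 0 < x + y →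
      k * y / (x + y) ≤ (k + 1) * y / (x + y) ∧
      (k + 1) * y / (x + y) ≤ k * y / (x + y) + 1 := by
    intro x y k hxy
    constructor
    · exact Nat.div_le_div_right (by nlinarith)
    · calc (k + 1) * y / (x + y) ≤ (k * y + (x + y)) / (x + y) :=
            Nat.div_le_div_right (by nlinarith)
        _ = k * y / (x + y) + 1 := Nat.add_div_right _ hxy
  -- agreement on letters implies equal partial sums
  have agree_floor : ∀ i, (∀ j, j < i → (chr a b)[j]? = (chr c d)[j]?) →
      i ≤ a + b → i ≤ c + d → i * b / (a + b) = i * d / (c + d) := by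
    intro i
    induction i with
    | zero => simp
    | succ i ih =>
      intro hag hi1 hi2
      have hG := ih (fun j hj => hag j (by omega)) (by omega) (by omega)
      have hj := hag i (by omega)
      rw [chr_get a b i (by omega), chr_get c d i (by omega)] at hj
      rw [Option.some_inj, decide_eq_decide] at hj
      obtain ⟨s1, s2⟩ := step a b i hn
      obtain ⟨t1, t2⟩ := step c d i hm
      omega
  -- a difference exists
  have hex : ∃ k : ℕ, (chr a b)[k]? ≠ (chr c d)[k]? := by
    by_contra hcon
    have hcon : ∀ k, (chr a b)[k]? = (chr c d)[k]? :=
      fun k => of_not_not (fun hk => hcon ⟨k, hk⟩)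
    have heq : chr a b = chr c d := List.ext_getElem? hcon
    have hlen : a + b = c + d := by
      have := congrArg List.length heq; simpa [chr] using this
    have hfl := agree_floor (a + b) (fun j _ => hcon j) le_rfl (by omega)
    rw [Nat.mul_div_cancel_left b hn] at hfl
    rw [hlen, Nat.mul_div_cancel_left d hm] at hfl
    subst hfl
    nlinarith
  set i := Nat.find hex with hidef
  have hine : (chr a b)[i]? ≠ (chr c d)[i]? := Nat.find_spec hex
  have hag : ∀ j, j < i → (chr a b)[j]? = (chr c d)[j]? := by
    intro j hj
    exact of_not_not (Nat.find_min hex hj)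
  rcases Nat.lt_or_ge i (a + b) with hia | hia
  · rcases Nat.lt_or_ge i (c + d) with hic | hic
    · -- both letters defined: first one false, second true
      have hfl := agree_floor i (fun j hj => hag j hj) (by omega) (by omega)
      have hk := key (i + 1)
      obtain ⟨s1, s2⟩ := step a b i hn
      obtain ⟨t1, t2⟩ := step c d i hm
      rw [chr_get a b i hia, chr_get c d i hic] at hine
      have hdec : decide (i * b / (a + b) < (i + 1) * b / (a + b)) ≠
          decide (i * d / (c + d) < (i + 1) * d / (c + d)) := by
        intro hc; exact hine (by rw [hc])
      have hb1 : ¬ (i * b / (a + b) < (i + 1) * b / (a + b)) := by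
        intro hlt
        have h2 : i * d / (c + d) < (i + 1) * d / (c + d) := by omega
        simp [hlt, h2] at hdec
      have hb2 : i * d / (c + d) < (i + 1) * d / (c + d) := by
        by_contra hq
        simp [hb1, hq] at hdec
      refine lexAux i _ _ hag (Or.inr ⟨?_, ?_⟩)
      · rw [chr_get a b i hia]; simp [hb1]
      · rw [chr_get c d i hic]; simp [hb2]
    · -- chr c d ends at i : contradiction with slopes
      have hnone : (chr c d)[c + d]? = none := List.getElem?_eq_none (by simp [chr])
      have him : i = c + d := by
        rcases Nat.lt_or_ge (c + d) i with hlt | hge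
        · exfalso
          have h3 := hag (c + d) hlt
          rw [chr_get a b (c + d) (by omega), hnone] at h3
          exact Option.some_ne_none _ h3
        · omega
      have hfl := agree_floor (c + d) (fun j hj => hag j (by omega)) (by omega) le_rfl
      rw [Nat.mul_div_cancel_left d hm] at hfl
      have h4 : d ≤ (c + d) * b / (a + b) := le_of_eq hfl.symm
      have h5 : d * (a + b) ≤ (c + d) * b := (Nat.le_div_iff_mul_le hn).mp h4
      nlinarith
  · -- chr a b ends at i : Lex by proper prefix
    have hnone : (chr a b)[i]? = none := List.getElem?_eq_none (by simpa [chr] using hia)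
    refine lexAux i _ _ hag (Or.inl ⟨hnone, ?_⟩)
    intro hnone2
    exact hine (hnone.trans hnone2.symm)

/-- For `(a,b), (c,d) ≠ (0,0)` with distinct slopes `b/a ≠ d/c` (i.e. `bc ≠ ad`),
`w_{a,b} < w_{c,d}` lexicographically iff `b/a < d/c` (i.e. `bc < ad`). -/
theorem stmt10 {a b c d : ℕ} (h1 : ¬(a = 0 ∧ b = 0)) (h2 : ¬(c = 0 ∧ d = 0))
    (h : b * c ≠ a * d) :
    List.Lex (· < ·) (chr a b) (chr c d) ↔ b * c < a * d := by
  constructor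
  · intro hlex
    rcases Nat.lt_trichotomy (b * c) (a * d) with hlt | heq | hgt
    · exact hlt
    · exact absurd heq h
    · exact absurd hlex (asymm (chr_lex_of_lt (show d * a < c * b by
        rw [mul_comm d a, mul_comm c b]; exact hgt)))
  · exact chr_lex_of_lt
end
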